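/- Let r ≥ 1 and define the r×r matrix S_r by (S_r)_{a,b} = (−1)^{a+b} · C(a+b−1, a−1). Then the vector b_r with entries (b_r)_b = C(r, b) for b = 1,…,r satisfies S_r^T · b_r = e_r, where e_r is the r-th standard basis vector. -/
import Mathlib

open Finset

lemma key (b : ℕ) : ∀ (r a : ℕ),
    ∑ k ∈ Finset.range (r+1), ((-1:ℝ))^k * (Nat.choose r k) * (Nat.choose (a+k) b)
      = (-1)^r * (if r ≤ b then ((Nat.choose a (b-r)):ℝ) else 0) := by
  intro r
  induction r with
  | zero => intro a; simp
  | succ r ih =>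
    intro a
    have expand : ∀ k, ((-1:ℝ))^(k+1) * (Nat.choose (r+1) (k+1)) * (Nat.choose (a+(k+1)) b)
        = -((-1:ℝ)^k * (Nat.choose r k) * (Nat.choose ((a+1)+k) b))
          + (-((-1:ℝ)^k * (Nat.choose r (k+1)) * (Nat.choose (a+(k+1)) b))) := by
      intro k
      rw [Nat.choose_succ_succ, show a+(k+1) = (a+1)+k from by omega]
      push_cast; ring
    have hB : ∑ k ∈ Finset.range (r+1), -(((-1:ℝ))^k * (Nat.choose r (k+1)) * (Nat.choose (a+(k+1)) b))
        = ∑ k ∈ Finset.range r, (((-1:ℝ))^(k+1) * (Nat.choose r (k+1)) * (Nat.choose (a+(k+1)) b)) := by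
      rw [Finset.sum_range_succ, Nat.choose_succ_self]
      simp only [Nat.cast_zero, mul_zero, zero_mul, neg_zero, add_zero]
      exact Finset.sum_congr rfl fun k _ => by ring
    have step : ∑ k ∈ Finset.range (r+2), ((-1:ℝ))^k * (Nat.choose (r+1) k) * (Nat.choose (a+k) b)
        = (∑ k ∈ Finset.range (r+1), ((-1:ℝ))^k * (Nat.choose r k) * (Nat.choose (a+k) b))
          - ∑ k ∈ Finset.range (r+1), ((-1:ℝ))^k * (Nat.choose r k) * (Nat.choose ((a+1)+k) b) := by
      rw [Finset.sum_range_succ' (fun k => ((-1:ℝ))^k * (Nat.choose (r+1) k) * (Nat.choose (a+k) b)),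
        Finset.sum_range_succ' (fun k => ((-1:ℝ))^k * (Nat.choose r k) * (Nat.choose (a+k) b))]
      simp only [expand]
      rw [Finset.sum_add_distrib, hB, Finset.sum_neg_distrib]
      simp only [pow_zero, Nat.choose_zero_right, Nat.cast_one, one_mul, add_zero]
      ring
    rw [step, ih a, ih (a+1)]
    by_cases h1 : r + 1 ≤ b
    · have h0 : r ≤ b := by omega
      rw [if_pos h1, if_pos h0, if_pos h0]
      have hP : (a+1).choose (b-r) = a.choose (b-r) + a.choose (b-(r+1)) := by
        rw [show b - r = (b-(r+1)) + 1 from by omega, Nat.choose_succ_succ]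
        simp only [Nat.succ_eq_add_one]
        omega
      rw [hP]
      push_cast; ring
    · by_cases h0 : r ≤ b
      · have hb : b = r := by omega
        rw [if_neg h1, if_pos h0, if_pos h0, hb]
        simp
      · rw [if_neg h1, if_neg h0, if_neg h0]; ring

/-- The vector `b_r` with `(b_r)_b = C(r, b)` satisfies `S_rᵀ b_r = e_r`,
where `(S_r)_{a,b} = (-1)^(a+b) C(a+b-1,a-1)` (1-based) and `e_r` is the last
standard basis vector. Index `a : Fin r` represents 1-based index `a+1`. -/
theorem S_transpose_mulVec_b_eq_e (r : ℕ) (hr : 1 ≤ r) :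
    (Matrix.transpose (Matrix.of fun a b : Fin r =>
        ((-1 : ℝ)) ^ ((a : ℕ) + (b : ℕ)) *
          (Nat.choose ((a : ℕ) + (b : ℕ) + 1) (a : ℕ)))).mulVec
      (fun b : Fin r => (Nat.choose r ((b : ℕ) + 1) : ℝ))
      = fun i : Fin r => if (i : ℕ) = r - 1 then 1 else 0 := by
  funext i
  have hK := key ((i:ℕ)+1) r (i:ℕ)
  rw [Finset.sum_range_succ' (fun k => ((-1:ℝ))^k * (Nat.choose r k) * (Nat.choose ((i:ℕ)+k) ((i:ℕ)+1)))] at hK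
  simp only [add_zero, pow_zero, Nat.choose_zero_right, Nat.cast_one, one_mul,
    Nat.choose_succ_self, Nat.cast_zero, mul_zero] at hK
  simp only [Matrix.mulVec, Matrix.transpose_apply, dotProduct, Matrix.of_apply,
    Fin.sum_univ_eq_sum_range]
  rw [Fin.sum_univ_eq_sum_range (fun k => ((-1:ℝ))^(k + (i:ℕ)) * (Nat.choose (k + (i:ℕ) + 1) k) * (Nat.choose r (k+1)))]
  have h2 : ∀ x ∈ Finset.range r, ((-1:ℝ))^(x+(i:ℕ)) * (Nat.choose (x+(i:ℕ)+1) x) * (Nat.choose r (x+1))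
      = ((-1:ℝ))^((i:ℕ)+1) * (((-1:ℝ))^(x+1) * (Nat.choose r (x+1)) * (Nat.choose ((i:ℕ)+(x+1)) ((i:ℕ)+1))) := by
    intro x _
    have hc : Nat.choose (x+(i:ℕ)+1) x = Nat.choose ((i:ℕ)+(x+1)) ((i:ℕ)+1) := by
      rw [show (i:ℕ)+(x+1) = x+(i:ℕ)+1 from by omega]
      rw [← Nat.choose_symm (show x ≤ x+(i:ℕ)+1 from by omega)]
      congr 1; omega
    rw [hc]
    simp only [pow_add, pow_one]
    ring
  rw [Finset.sum_congr rfl h2, ← Finset.mul_sum, hK]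
  by_cases h : (i:ℕ) = r - 1
  · have hi1 : (i:ℕ) + 1 = r := by omega
    rw [if_pos h, if_pos (by omega : r ≤ (i:ℕ)+1), show (i:ℕ)+1-r = 0 from by omega,
      Nat.choose_zero_right, hi1]
    rw [Nat.cast_one, mul_one, ← pow_add]
    exact Even.neg_one_pow ⟨r, rfl⟩
  · have : ¬ r ≤ (i:ℕ) + 1 := by have := i.isLt; omega
    rw [if_neg h, if_neg this, mul_zero, mul_zero]
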